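/- Define the run length of zeros r_n(x) = max{ k ≥ 0 : there exists 0 ≤ i ≤ n−k with ε_{i+1}(x) = ⋯ = ε_{i+k}(x) = 0 }. Then for μ-almost all x ∈ [0,1), liminf_{n→∞} log r_n(x) / log n ≥ α. -/

import Mathlib

open MeasureTheory Filter Real Set

/-- The intermittent (Liverani–Saussol–Vaienti) map. -/
noncomputable def T (α : ℝ) (x : ℝ) : ℝ :=
  if x < 1/2 then x * (1 + 2 ^ α * x ^ α) else 2 * x - 1

/-- The longest run of zero digits among ε₁(x),…,εₙ(x), where εₖ(x) = 0 iff T^[k-1] x ∈ [0,1/2). -/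
noncomputable def runZero (α : ℝ) (n : ℕ) (x : ℝ) : ℕ :=
  sSup {k | ∃ i, i + k ≤ n ∧ ∀ j < k, (T α)^[i + j] x < 1/2}

/-- The longest run of one digits among ε₁(x),…,εₙ(x), where εₖ(x) = 1 iff T^[k-1] x ∈ [1/2,1). -/
noncomputable def runOne (α : ℝ) (n : ℕ) (x : ℝ) : ℕ :=
  sSup {k | ∃ i, i + k ≤ n ∧ ∀ j < k, 1/2 ≤ (T α)^[i + j] x}

/-- Cylinder set of length `m` with digit word `w` in the dynamical partition of `T α`
generated by `{[0,1/2), [1/2,1)}` (digit `false` = left branch, `true` = right branch). -/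
def cyl (α : ℝ) (w : ℕ → Bool) (m : ℕ) : Set ℝ :=
  {x | x ∈ Set.Ico (0:ℝ) 1 ∧ ∀ j < m, ((T α)^[j] x < 1/2 ↔ w j = false)}

open Topology

/-! Decay of correlations lets a cylinder `[0^k]` be hit, after a gap of order `k`, with
probability at least half its measure whatever happened before. Hence the orbit misses `[0^k]` at
all of `n / s` times spaced `s ≈ k` apart with probability at most `(1 - μ[0^k] / 2) ^ (n / s)`.
For `k = ⌈n ^ β⌉` and `μ[0^k] ≳ k ^ (1 - 1/α)` this is `exp (-c n ^ (1 - β/α))`, summable when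
`β < α`, so by Borel–Cantelli `r_n(x) ≥ n ^ β` eventually for a.e. `x`; then let `β ↑ α`. -/

lemma setOf_forall_lt_succ_iterate_notMem {X : Type*} {f : X → X} {A : Set X} (N : ℕ) :
    {x | ∀ i < N + 1, f^[i] x ∉ A} = f ⁻¹' {x | ∀ i < N, f^[i] x ∉ A} \ A := by
  ext x
  simp only [mem_ofPred_eq, Set.mem_sdiff, mem_preimage, Nat.forall_lt_succ_left,
    Function.iterate_zero_apply, Function.iterate_succ_apply]
  tauto

lemma measureReal_setOf_forall_iterate_notMem_le {X : Type*} [MeasurableSpace X]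
    {μ : Measure X} [IsProbabilityMeasure μ] {f : X → X} {A : Set X}
    (hf : MeasurePreserving f μ μ) (hA : MeasurableSet A) {c : ℝ}
    (hc : ∀ B, MeasurableSet B → c * μ.real B ≤ μ.real (A ∩ f ⁻¹' B)) (N : ℕ) :
    μ.real {x | ∀ i < N, f^[i] x ∉ A} ≤ (1 - c) ^ N := by
  have hc1 : c ≤ 1 := by
    simpa using (hc univ MeasurableSet.univ).trans measureReal_le_one
  induction N with
  | zero => simp
  | succ N ih =>
    set G := {x | ∀ i < N, f^[i] x ∉ A}
    have hG : MeasurableSet G := by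
      refine measurableSet_setOfPred.2 (Measurable.forall fun i => Measurable.forall fun _ => ?_)
      exact measurableSet_setOfPred.1 (hA.preimage (hf.measurable.iterate i)).compl
    have hsplit := measureReal_inter_add_sdiff (μ := μ) (s := f ⁻¹' G) hA
    rw [hf.measureReal_preimage hG.nullMeasurableSet, inter_comm] at hsplit
    rw [setOf_forall_lt_succ_iterate_notMem, pow_succ']
    nlinarith [hc G hG]

lemma ae_eventually_notMem_of_summable_measureReal {X : Type*} [MeasurableSpace X]
    {μ : Measure X} [IsFiniteMeasure μ] {s : ℕ → Set X}
    (hs : Summable fun n => μ.real (s n)) : ∀ᵐ x ∂μ, ∀ᶠ n in atTop, x ∉ s n := by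
  apply ae_eventually_notMem
  rw [tsum_congr fun n => (ofReal_measureReal (μ := μ) (s := s n)).symm,
    ← ENNReal.ofReal_tsum_of_nonneg (fun _ => measureReal_nonneg) hs]
  exact ENNReal.ofReal_ne_top

lemma summable_exp_neg_mul_rpow {a δ : ℝ} (ha : 0 < a) (hδ : 0 < δ) :
    Summable fun n : ℕ => exp (-a * n ^ δ) := by
  refine summable_of_isBigO_nat (Real.summable_nat_rpow.2 (by norm_num : (-2 : ℝ) < -1)) ?_
  have h := ((isLittleO_exp_neg_mul_rpow_atTop ha (-2 / δ)).comp_tendsto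
    ((tendsto_rpow_atTop hδ).comp tendsto_natCast_atTop_atTop)).isBigO
  refine h.congr_right fun n => ?_
  dsimp only [Function.comp_apply]
  rw [← rpow_mul n.cast_nonneg, mul_div_cancel₀ _ hδ.ne']

lemma two_rpow_neg_mul_le_ceil_rpow_rpow_neg {β γ : ℝ} (hβ : 0 ≤ β) (hγ : 0 ≤ γ) {n : ℕ}
    (hn : 1 ≤ n) : 2 ^ (-γ) * (n : ℝ) ^ (-(β * γ)) ≤ (⌈(n : ℝ) ^ β⌉₊ : ℝ) ^ (-γ) := by
  have h1 : 1 ≤ (n : ℝ) ^ β := one_le_rpow (by exact_mod_cast hn) hβ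
  have hk : (⌈(n : ℝ) ^ β⌉₊ : ℝ) ≤ 2 * (n : ℝ) ^ β := Nat.ceil_le_two_mul (by linarith)
  have hk0 : (0 : ℝ) < ⌈(n : ℝ) ^ β⌉₊ := by exact_mod_cast Nat.ceil_pos.2 (by linarith)
  calc 2 ^ (-γ) * (n : ℝ) ^ (-(β * γ)) = (2 * (n : ℝ) ^ β) ^ (-γ) := by
        rw [mul_rpow zero_le_two (by linarith), ← rpow_mul n.cast_nonneg, mul_neg]
    _ ≤ _ := rpow_le_rpow_of_nonpos hk0 hk (by linarith)

lemma le_mul_natDiv_of_le_mul_ceil_rpow {θ β c p : ℝ} (hθ : 0 ≤ θ) (hβ : 0 ≤ β) (hc : 0 ≤ c)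
    {L n s : ℕ} (hn : 1 ≤ n) (hs0 : 0 < s) (hs : s ≤ L * ⌈(n : ℝ) ^ β⌉₊)
    (hp : c * (⌈(n : ℝ) ^ β⌉₊ : ℝ) ^ (-θ) ≤ p) (hp1 : p ≤ 1) :
    c * 2 ^ (-(1 + θ)) / L * (n : ℝ) ^ (1 - β * (1 + θ)) - 1 ≤ p * (n / s : ℕ) := by
  set k : ℕ := ⌈(n : ℝ) ^ β⌉₊
  have hn0 : (0 : ℝ) < n := by exact_mod_cast hn
  have hk0 : (0 : ℝ) < k := by exact_mod_cast Nat.ceil_pos.2 (by positivity)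
  have hs0' : (0 : ℝ) < s := by exact_mod_cast hs0
  have hp0 : 0 ≤ p := (by positivity : 0 ≤ c * (k : ℝ) ^ (-θ)).trans hp
  have hN : (n : ℝ) / s - 1 ≤ (n / s : ℕ) := by
    rw [← Nat.floor_div_eq_div (K := ℝ)]
    exact (Nat.sub_one_lt_floor _).le
  have hps : c * 2 ^ (-(1 + θ)) / L * (n : ℝ) ^ (1 - β * (1 + θ)) ≤ p * n / s :=
    calc c * 2 ^ (-(1 + θ)) / L * (n : ℝ) ^ (1 - β * (1 + θ))
        = c / L * n * (2 ^ (-(1 + θ)) * (n : ℝ) ^ (-(β * (1 + θ)))) := by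
          rw [rpow_sub hn0, rpow_one, rpow_neg hn0.le]; ring
      _ ≤ c / L * n * (k : ℝ) ^ (-(1 + θ)) := by
          gcongr; exact two_rpow_neg_mul_le_ceil_rpow_rpow_neg hβ (by linarith) hn
      _ = c * (k : ℝ) ^ (-θ) * n / (L * k) := by
          rw [neg_add, rpow_add hk0, rpow_neg_one]; field_simp
      _ ≤ p * n / s := by
          gcongr
          exact_mod_cast hs
  nlinarith [mul_le_mul_of_nonneg_left hN hp0, show p * n / s = p * (n / s) by ring]

lemma exists_gap_half_mixing {X : Type*} [MeasurableSpace X] {μ : Measure X} {f : X → X}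
    {A : ℕ → Set X} {θ C : ℝ} {l : ℕ} (hθ : 0 < θ)
    (hdecay : ∀ (m : ℕ) (B : Set X), MeasurableSet B → ∀ n : ℕ, l < n →
      |μ.real (A m ∩ f^[n + m] ⁻¹' B) - μ.real (A m) * μ.real B|
        ≤ C * (m : ℝ) ^ θ * ((n : ℝ) - l) ^ (-θ) * μ.real (A m) * μ.real B) :
    ∃ c₀ : ℕ, 0 < c₀ ∧ ∀ k : ℕ, 0 < k → ∀ B : Set X, MeasurableSet B →
      μ.real (A k) / 2 * μ.real B ≤ μ.real (A k ∩ f^[l + c₀ * k + k] ⁻¹' B) := by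
  have hlim : Tendsto (fun c : ℕ => C * (c : ℝ) ^ (-θ)) atTop (𝓝 0) := by
    simpa using ((tendsto_rpow_neg_atTop hθ).comp tendsto_natCast_atTop_atTop).const_mul C
  obtain ⟨c₀, hc₀, hC⟩ := ((eventually_gt_atTop 0).and
    (hlim.eventually (ge_mem_nhds (by norm_num : (0 : ℝ) < 1 / 2)))).exists
  refine ⟨c₀, hc₀, fun k hk B hB => ?_⟩
  have hk0 : (0 : ℝ) < k := by exact_mod_cast hk
  have hcoef : C * (k : ℝ) ^ θ * (((l + c₀ * k : ℕ) : ℝ) - l) ^ (-θ) = C * (c₀ : ℝ) ^ (-θ) := by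
    push_cast
    rw [add_sub_cancel_left, mul_rpow c₀.cast_nonneg hk0.le, rpow_neg hk0.le,
      rpow_neg c₀.cast_nonneg]
    field_simp
  have h := abs_le.1 (hdecay k B hB (l + c₀ * k) (by have := Nat.mul_pos hc₀ hk; omega))
  rw [hcoef] at h
  have hAB : 0 ≤ μ.real (A k) * μ.real B := by positivity
  nlinarith [mul_le_mul_of_nonneg_right hC hAB]

theorem ae_eventually_exists_iterate_mem_of_decay {X : Type*} [MeasurableSpace X]
    {μ : Measure X} [IsProbabilityMeasure μ] {f : X → X} (hf : MeasurePreserving f μ μ)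
    {A : ℕ → Set X} (hA : ∀ k, MeasurableSet (A k)) {θ C c β : ℝ} {l : ℕ} (hθ : 0 < θ)
    (hdecay : ∀ (m : ℕ) (B : Set X), MeasurableSet B → ∀ n : ℕ, l < n →
      |μ.real (A m ∩ f^[n + m] ⁻¹' B) - μ.real (A m) * μ.real B|
        ≤ C * (m : ℝ) ^ θ * ((n : ℝ) - l) ^ (-θ) * μ.real (A m) * μ.real B)
    (hc : 0 < c) (hA_ge : ∀ k : ℕ, 1 ≤ k → c * (k : ℝ) ^ (-θ) ≤ μ.real (A k))
    (hβ0 : 0 ≤ β) (hβ : β * (1 + θ) < 1) :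
    ∀ᵐ x ∂μ, ∀ᶠ n : ℕ in atTop, ∃ i, i + ⌈(n : ℝ) ^ β⌉₊ ≤ n ∧ f^[i] x ∈ A ⌈(n : ℝ) ^ β⌉₊ := by
  obtain ⟨c₀, hc₀, hmix⟩ := exists_gap_half_mixing hθ hdecay
  set k : ℕ → ℕ := fun n => ⌈(n : ℝ) ^ β⌉₊
  set s : ℕ → ℕ := fun n => l + c₀ * k n + k n
  set D : ℕ → Set X := fun n => {x | ∀ i < n / s n, (f^[s n])^[i] x ∉ A (k n)}
  set a : ℝ := c * 2 ^ (-(1 + θ)) / (l + c₀ + 1 : ℕ)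
  have ha : 0 < a := by positivity
  have hk : ∀ n, 1 ≤ n → 1 ≤ k n := fun n hn =>
    Nat.one_le_iff_ne_zero.2 (Nat.ceil_pos.2 (by positivity)).ne'
  have hD : ∀ n, 1 ≤ n →
      μ.real (D n) ≤ exp (1 / 2) * exp (-(a / 2) * (n : ℝ) ^ (1 - β * (1 + θ))) := by
    intro n hn
    set p := μ.real (A (k n))
    have hp1 : p ≤ 1 := measureReal_le_one
    have hs : s n ≤ (l + c₀ + 1) * k n := by
      show l + c₀ * k n + k n ≤ _
      nlinarith [hk n hn]
    have hs0 : 0 < s n := by have := hk n hn; simp only [s]; omega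
    have hNp := le_mul_natDiv_of_le_mul_ceil_rpow hθ.le hβ0 hc.le hn hs0 hs (hA_ge _ (hk n hn)) hp1
    calc μ.real (D n) ≤ (1 - p / 2) ^ (n / s n) :=
          measureReal_setOf_forall_iterate_notMem_le (hf.iterate _) (hA _) (hmix _ (hk n hn)) _
      _ ≤ exp (-(p / 2)) ^ (n / s n) :=
          pow_le_pow_left₀ (by linarith [measureReal_nonneg (μ := μ) (s := A (k n))])
            (one_sub_le_exp_neg _) _
      _ ≤ exp (1 / 2) * exp (-(a / 2) * (n : ℝ) ^ (1 - β * (1 + θ))) := by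
          rw [← exp_nat_mul, ← exp_add]
          exact exp_le_exp.2 (by linarith)
  have hsum : Summable fun n => μ.real (D n) := by
    refine Summable.of_norm_bounded_eventually_nat ((summable_exp_neg_mul_rpow
      (δ := 1 - β * (1 + θ)) (half_pos ha) (by linarith)).mul_left (exp (1 / 2))) ?_
    filter_upwards [eventually_ge_atTop 1] with n hn
    rw [Real.norm_of_nonneg measureReal_nonneg]
    exact hD n hn
  filter_upwards [ae_eventually_notMem_of_summable_measureReal hsum] with x hx
  filter_upwards [hx] with n hxn
  simp only [D, mem_ofPred_eq, not_forall, not_not, ← Function.iterate_mul] at hxn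
  obtain ⟨i, hi, hxi⟩ := hxn
  have hks : k n ≤ s n := by simp only [s]; omega
  refine ⟨s n * i, ?_, hxi⟩
  calc s n * i + k n ≤ s n * (n / s n) := by nlinarith [Nat.mul_le_mul_left (s n) hi]
    _ ≤ n := Nat.mul_div_le n (s n)

lemma measurable_T (α : ℝ) : Measurable (T α) :=
  Measurable.ite (measurableSet_lt measurable_id measurable_const) (by fun_prop) (by fun_prop)

lemma measurableSet_cyl (α : ℝ) (w : ℕ → Bool) (m : ℕ) : MeasurableSet (cyl α w m) :=
  measurableSet_setOfPred.2 <| (measurableSet_setOfPred.1 measurableSet_Ico).and <|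
    Measurable.forall fun j => Measurable.forall fun _ =>
      (measurableSet_setOfPred.1 (measurableSet_lt ((measurable_T α).iterate j)
        measurable_const)).iff measurable_const

lemma runZero_le (α : ℝ) (n : ℕ) (x : ℝ) : runZero α n x ≤ n :=
  csSup_le ⟨0, 0, by simp, by simp⟩ fun _ ⟨_, hi, _⟩ => by omega

lemma le_runZero_of_iterate_mem_cyl {α x : ℝ} {n i k : ℕ} (hik : i + k ≤ n)
    (hx : (T α)^[i] x ∈ cyl α (fun _ => false) k) : k ≤ runZero α n x :=
  le_csSup ⟨n, fun _ ⟨_, hi', _⟩ => by omega⟩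
    ⟨i, hik, fun j hj => by simpa [add_comm i, Function.iterate_add_apply] using (hx.2 j hj).2 rfl⟩

lemma le_liminf_log_div_log {r : ℕ → ℕ} (hr : ∀ n, r n ≤ n) {β : ℝ}
    (h : ∀ᶠ n : ℕ in atTop, (n : ℝ) ^ β ≤ r n) :
    β ≤ liminf (fun n : ℕ => log (r n) / log n) atTop := by
  have hle : ∀ᶠ n : ℕ in atTop, log (r n) / log n ≤ 1 := by
    filter_upwards [eventually_ge_atTop 2] with n hn
    refine div_le_one_of_le₀ ?_ (log_natCast_nonneg n)
    rcases Nat.eq_zero_or_pos (r n) with h0 | hpos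
    · simp [h0, log_natCast_nonneg]
    · exact log_le_log (by exact_mod_cast hpos) (by exact_mod_cast hr n)
  refine le_liminf_of_le (isCoboundedUnder_ge_of_eventually_le atTop hle) ?_
  filter_upwards [h, eventually_ge_atTop 2] with n hn hn2
  have hn1 : (1 : ℝ) < n := by exact_mod_cast hn2
  rw [le_div_iff₀ (log_pos hn1), ← log_rpow (by linarith)]
  exact log_le_log (by positivity) hn

theorem stmt9_general (α : ℝ) (hα0 : 0 < α) (hα1 : α < 1)
    (μ : Measure ℝ) [IsProbabilityMeasure μ]
    (hinv : MeasurePreserving (T α) μ μ) (C₁ : ℝ) (l : ℕ)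
    (hdecay : ∀ (m : ℕ) (w : ℕ → Bool) (B : Set ℝ), MeasurableSet B → ∀ n : ℕ, l < n →
      |(μ (cyl α w m ∩ ((T α)^[n + m]) ⁻¹' B)).toReal
          - (μ (cyl α w m)).toReal * (μ B).toReal|
        ≤ C₁ * (m : ℝ) ^ (1/α - 1) * ((n : ℝ) - l) ^ (-(1/α - 1))
            * (μ (cyl α w m)).toReal * (μ B).toReal)
    (Ct : ℝ) (hCt : 1 < Ct)
    (hcyl : ∀ k : ℕ, 1 ≤ k →
      Ct⁻¹ * (k : ℝ) ^ (-(1/α - 1)) ≤ (μ (cyl α (fun _ => false) k)).toReal ∧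
      (μ (cyl α (fun _ => false) k)).toReal ≤ Ct * (k : ℝ) ^ (-(1/α - 1))) :
    ∀ᵐ x ∂μ, α ≤ Filter.liminf
      (fun n : ℕ => Real.log (runZero α n x) / Real.log n) atTop := by
  have hθ : 0 < 1 / α - 1 := by rw [sub_pos, lt_div_iff₀ hα0]; linarith
  set β : ℕ → ℝ := fun m => α * (1 - 1 / ((m : ℝ) + 1))
  have hβ0 : ∀ m, 0 ≤ β m := fun m =>
    mul_nonneg hα0.le (sub_nonneg.2 (div_le_one_of_le₀ (by simp) (by positivity)))
  have hβα : ∀ m, β m * (1 + (1 / α - 1)) < 1 := fun m => by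
    have : 0 < 1 / ((m : ℝ) + 1) := by positivity
    field_simp; nlinarith
  have hrun : ∀ m, ∀ᵐ x ∂μ, ∀ᶠ n : ℕ in atTop, (n : ℝ) ^ β m ≤ runZero α n x := fun m => by
    filter_upwards [ae_eventually_exists_iterate_mem_of_decay hinv (measurableSet_cyl α _) hθ
      (fun m B hB n hn => hdecay m _ B hB n hn) (inv_pos.2 (by linarith))
      (fun k hk => (hcyl k hk).1) (hβ0 m) (hβα m)] with x hx
    filter_upwards [hx] with n ⟨i, hin, hxi⟩
    exact (Nat.le_ceil _).trans (by exact_mod_cast le_runZero_of_iterate_mem_cyl hin hxi)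
  have hlim : Tendsto β atTop (𝓝 α) := by
    have := (tendsto_one_div_add_atTop_nhds_zero_nat.const_sub 1).const_mul α
    rwa [sub_zero, mul_one] at this
  filter_upwards [ae_all_iff.2 hrun] with x hx
  exact le_of_tendsto' hlim fun m => le_liminf_log_div_log (fun n => runZero_le α n x) (hx m)

theorem stmt9 (α : ℝ) (hα0 : 0 < α) (hα1 : α < 1)
    (μ : Measure ℝ) [IsProbabilityMeasure μ]
    (hinv : MeasurePreserving (T α) μ μ) (hac : μ ≪ volume)
    (C₁ : ℝ) (hC₁ : 0 < C₁) (l : ℕ)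
    (hdecay : ∀ (m : ℕ) (w : ℕ → Bool) (B : Set ℝ), MeasurableSet B → ∀ n : ℕ, l < n →
      |(μ (cyl α w m ∩ ((T α)^[n + m]) ⁻¹' B)).toReal
          - (μ (cyl α w m)).toReal * (μ B).toReal|
        ≤ C₁ * (m : ℝ) ^ (1/α - 1) * ((n : ℝ) - l) ^ (-(1/α - 1))
            * (μ (cyl α w m)).toReal * (μ B).toReal)
    (Ct : ℝ) (hCt : 1 < Ct)
    (hcyl : ∀ k : ℕ, 1 ≤ k →
      Ct⁻¹ * (k : ℝ) ^ (-(1/α - 1)) ≤ (μ (cyl α (fun _ => false) k)).toReal ∧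
      (μ (cyl α (fun _ => false) k)).toReal ≤ Ct * (k : ℝ) ^ (-(1/α - 1))) :
    ∀ᵐ x ∂μ, α ≤ Filter.liminf
      (fun n : ℕ => Real.log (runZero α n x) / Real.log n) atTop :=
  stmt9_general α hα0 hα1 μ hinv C₁ l hdecay Ct hCt hcyl
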